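/- arXiv:2311.01758 — 2 statements merged into one kernel-verified Lean document; each statement's English description precedes it below -/
import Mathlib

section
/- Let S be a nonempty, closed and unbounded subset of ℝⁿ, and let d(·;S): ℝⁿ → ℝ be the distance function d(x;S) := inf{‖y − x‖ : y ∈ S}. Then N(∞;S) ⊆ ℝ₊·∂d(∞;S), where ℝ₊·∂d(∞;S) := {t·u : t ≥ 0, u ∈ ∂d(∞;S)} and ∂d(∞;S) is the limiting subdifferential at infinity of the function x ↦ d(x;S). -/
open Filter Topology Set Pointwise RealInnerProductSpace

noncomputable section

variable {E : Type*} [NormedAddCommGroup E] [InnerProductSpace ℝ E]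

/-- The Fréchet (regular) normal cone to `Ω` at `x`:
`{v | limsup_{y→x, y∈Ω} ⟪v, y-x⟫/‖y-x‖ ≤ 0}`, empty if `x ∉ Ω`. -/
def FrechetNormalCone (Ω : Set E) (x : E) : Set E :=
  {v | x ∈ Ω ∧ ∀ ε > (0:ℝ), ∀ᶠ y in 𝓝[Ω] x, ⟪v, y - x⟫ ≤ ε * ‖y - x‖}

/-- The limiting (Mordukhovich) normal cone to `Ω` at `x`. -/
def LimitingNormalCone (Ω : Set E) (x : E) : Set E :=
  {v | ∃ xs vs : ℕ → E, (∀ k, vs k ∈ FrechetNormalCone Ω (xs k)) ∧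
    Tendsto xs atTop (𝓝 x) ∧ Tendsto vs atTop (𝓝 v)}

/-- The normal cone to an unbounded set `Ω` at infinity. -/
def NormalConeAtInfty (Ω : Set E) : Set E :=
  {v | ∃ xs vs : ℕ → E, (∀ k, vs k ∈ FrechetNormalCone Ω (xs k)) ∧
    Tendsto (fun k => ‖xs k‖) atTop atTop ∧ Tendsto vs atTop (𝓝 v)}

/-- The epigraph of `f : E → ℝ ∪ {+∞}` as a subset of the (ℓ²-)product `E × ℝ`. -/
def epiSet (f : E → EReal) : Set (WithLp 2 (E × ℝ)) :=
  {p | f (WithLp.equiv 2 (E × ℝ) p).1 ≤ ((WithLp.equiv 2 (E × ℝ) p).2 : EReal)}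

/-- The point `(x, t)` of the (ℓ²-)product `E × ℝ`. -/
def mkP (x : E) (t : ℝ) : WithLp 2 (E × ℝ) := (WithLp.equiv 2 (E × ℝ)).symm (x, t)

/-- `𝒩(f)`: limits of limiting normals to `epi f` at points `(x_k, f(x_k))` with `‖x_k‖ → ∞`. -/
def NclAtInfty (f : E → EReal) : Set (E × ℝ) :=
  {q | ∃ (xs : ℕ → E) (ws : ℕ → WithLp 2 (E × ℝ)),
    (∀ k, f (xs k) ≠ ⊤) ∧
    Tendsto (fun k => ‖xs k‖) atTop atTop ∧
    (∀ k, ws k ∈ LimitingNormalCone (epiSet f) (mkP (xs k) (f (xs k)).toReal)) ∧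
    Tendsto (fun k => WithLp.equiv 2 (E × ℝ) (ws k)) atTop (𝓝 q)}

/-- The limiting subdifferential of `f` at infinity: `∂f(∞) = {u | (u,-1) ∈ 𝒩(f)}`. -/
def subInfty (f : E → EReal) : Set E := {u | (u, (-1 : ℝ)) ∈ NclAtInfty f}

/-- The singular subdifferential of `f` at infinity: `∂^∞f(∞) = {u | (u,0) ∈ 𝒩(f)}`. -/
def singSubInfty (f : E → EReal) : Set E := {u | (u, (0 : ℝ)) ∈ NclAtInfty f}

/-- The singular subdifferential of `f` at a point `x ∈ dom f`:
`∂^∞f(x) = {v | (v,0) ∈ N((x,f(x)); epi f)}`, empty if `x ∉ dom f`. -/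
def singSub (f : E → EReal) (x : E) : Set E :=
  {v | f x ≠ ⊤ ∧ mkP v 0 ∈ LimitingNormalCone (epiSet f) (mkP x (f x).toReal)}

/-- `λ∘∂f(∞)`: equals `λ • ∂f(∞)` for `λ ≠ 0` and `∂^∞f(∞)` for `λ = 0`. -/
def lamCirc (f : E → EReal) (lam : ℝ) : Set E :=
  if lam = 0 then singSubInfty f else lam • subInfty f

/-- `f` is Lipschitz at infinity. -/
def LipschitzAtInfty (f : E → ℝ) : Prop :=
  ∃ L > (0:ℝ), ∃ R > (0:ℝ), ∀ x x' : E, R < ‖x‖ → R < ‖x'‖ → |f x - f x'| ≤ L * ‖x - x'‖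

end

/-! A Fréchet normal `w` to `S` at `x ∈ S` with `‖w‖ ≤ 1` gives the Fréchet normal `(w, -1)` to
the epigraph of `d(·;S)` at `(x, 0)`: if `(y, s)` lies in the epigraph and `q ∈ S` is a nearest
point to `y`, then `⟪w, y - x⟫ - s ≤ ⟪w, q - x⟫ + (‖y - q‖ - s) ≤ ⟪w, q - x⟫`, while
`‖q - x‖ ≤ 2 ‖y - x‖`. Rescaling normals `v_k → v` at points `x_k → ∞` by `max 1 ‖v_k‖` then
exhibits `v / max 1 ‖v‖` as an element of `∂d(∞;S)`. -/

section NormalCones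

variable {E : Type*} [NormedAddCommGroup E] [InnerProductSpace ℝ E]

theorem smul_mem_frechetNormalCone {Ω : Set E} {x v : E} (hv : v ∈ FrechetNormalCone Ω x)
    {c : ℝ} (hc : 0 < c) : c • v ∈ FrechetNormalCone Ω x := by
  refine ⟨hv.1, fun ε hε => ?_⟩
  filter_upwards [hv.2 (ε / c) (by positivity)] with y hy
  calc ⟪c • v, y - x⟫ = c * ⟪v, y - x⟫ := real_inner_smul_left _ _ _
    _ ≤ c * (ε / c * ‖y - x‖) := mul_le_mul_of_nonneg_left hy hc.le
    _ = ε * ‖y - x‖ := by field_simp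

theorem frechetNormalCone_subset_limitingNormalCone (Ω : Set E) (x : E) :
    FrechetNormalCone Ω x ⊆ LimitingNormalCone Ω x := fun v hv =>
  ⟨fun _ => x, fun _ => v, fun _ => hv, tendsto_const_nhds, tendsto_const_nhds⟩

theorem inner_mkP_sub_mkP (w x : E) (s t : ℝ) (p : WithLp 2 (E × ℝ)) :
    ⟪mkP w s, p - mkP x t⟫ = ⟪w, p.fst - x⟫ + s * (p.snd - t) := by
  simp [mkP, mul_comm]

theorem norm_inv_max_one_smul_le_one (v : E) : ‖(max 1 ‖v‖)⁻¹ • v‖ ≤ 1 := by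
  rw [norm_smul, norm_inv, Real.norm_of_nonneg (by positivity)]
  exact inv_mul_le_one_of_le₀ (le_max_right _ _) (by positivity)

theorem mkP_neg_one_mem_frechetNormalCone_epiSet_infDist [ProperSpace E] {S : Set E}
    (hS : IsClosed S) {x w : E} (hw : w ∈ FrechetNormalCone S x) (hw1 : ‖w‖ ≤ 1) :
    mkP w (-1) ∈ FrechetNormalCone
      (epiSet fun y => ((Metric.infDist y S : ℝ) : EReal)) (mkP x 0) := by
  have hx : x ∈ S := hw.1
  refine ⟨by simp [epiSet, mkP, Metric.infDist_zero_of_mem hx], fun ε hε => ?_⟩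
  obtain ⟨δ, hδ, hδS⟩ :=
    Metric.nhdsWithin_basis_ball.eventually_iff.1 (hw.2 (ε / 2) (by positivity))
  refine Metric.nhdsWithin_basis_ball.eventually_iff.2
    ⟨δ / 2, by positivity, fun p ⟨hp, hp_epi⟩ => ?_⟩
  rw [Metric.mem_ball, dist_eq_norm] at hp
  replace hp_epi : Metric.infDist p.fst S ≤ p.snd := by simpa [epiSet] using hp_epi
  obtain ⟨q, hqS, hq⟩ := hS.exists_infDist_eq_dist ⟨x, hx⟩ p.fst
  rw [dist_eq_norm] at hq
  have hpx : ‖p.fst - x‖ ≤ ‖p - mkP x 0‖ := by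
    rw [← dist_eq_norm, ← dist_eq_norm]
    exact WithLp.dist_fst_le p (mkP x 0)
  have hpq : ‖p.fst - q‖ ≤ ‖p.fst - x‖ := by
    simpa [hq, dist_eq_norm] using Metric.infDist_le_dist_of_mem (x := p.fst) hx
  have hqx : ‖q - x‖ ≤ 2 * ‖p - mkP x 0‖ := by
    linarith [norm_sub_le_norm_sub_add_norm_sub q p.fst x, norm_sub_rev q p.fst]
  have hw_pq : ⟪w, p.fst - q⟫ ≤ p.snd := calc
    ⟪w, p.fst - q⟫ ≤ ‖w‖ * ‖p.fst - q‖ := real_inner_le_norm _ _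
    _ ≤ ‖p.fst - q‖ := mul_le_of_le_one_left (norm_nonneg _) hw1
    _ ≤ p.snd := hq ▸ hp_epi
  calc ⟪mkP w (-1), p - mkP x 0⟫ = ⟪w, q - x⟫ + (⟪w, p.fst - q⟫ - p.snd) := by
        rw [inner_mkP_sub_mkP, ← sub_add_sub_cancel p.fst q x, inner_add_right]; ring
    _ ≤ ⟪w, q - x⟫ := by linarith
    _ ≤ ε / 2 * ‖q - x‖ := hδS ⟨by rw [Metric.mem_ball, dist_eq_norm]; linarith, hqS⟩
    _ ≤ ε * ‖p - mkP x 0‖ := by nlinarith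

end NormalCones

theorem normalConeAtInfty_subset_scalings_subInfty_dist_general {n : ℕ}
    (S : Set (EuclideanSpace ℝ (Fin n)))
    (hScl : IsClosed S) :
    NormalConeAtInfty S ⊆
      {w | ∃ t : ℝ, 0 ≤ t ∧ ∃ u ∈ subInfty
        (fun x : EuclideanSpace ℝ (Fin n) => ((Metric.infDist x S : ℝ) : EReal)), w = t • u} := by
  rintro v ⟨xs, vs, hvs, hxs, hv⟩
  have ht : 0 < max 1 ‖v‖ := by positivity
  refine ⟨max 1 ‖v‖, ht.le, (max 1 ‖v‖)⁻¹ • v, ?_, (smul_inv_smul₀ ht.ne' v).symm⟩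
  set us := fun k => (max 1 ‖vs k‖)⁻¹ • vs k
  have hus : ∀ k, us k ∈ FrechetNormalCone S (xs k) := fun k =>
    smul_mem_frechetNormalCone (hvs k) (by positivity)
  refine ⟨xs, fun k => mkP (us k) (-1), fun k => EReal.coe_ne_top _, hxs, fun k => ?_, ?_⟩
  · simp only [Metric.infDist_zero_of_mem (hvs k).1, EReal.toReal_coe]
    exact frechetNormalCone_subset_limitingNormalCone _ _ <|
      mkP_neg_one_mem_frechetNormalCone_epiSet_infDist hScl (hus k)
        (norm_inv_max_one_smul_le_one _)
  · have hus_lim : Tendsto us atTop (𝓝 ((max 1 ‖v‖)⁻¹ • v)) :=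
      ((tendsto_const_nhds.max hv.norm).inv₀ ht.ne').smul hv
    simpa [mkP] using hus_lim.prodMk_nhds tendsto_const_nhds

/-- Proposition 4.1: `N(∞;S) ⊆ ℝ₊·∂d(∞;S)`. -/
theorem normalConeAtInfty_subset_scalings_subInfty_dist {n : ℕ}
    (S : Set (EuclideanSpace ℝ (Fin n)))
    (hSne : S.Nonempty) (hScl : IsClosed S) (hSunbdd : ¬ Bornology.IsBounded S) :
    NormalConeAtInfty S ⊆
      {w | ∃ t : ℝ, 0 ≤ t ∧ ∃ u ∈ subInfty
        (fun x : EuclideanSpace ℝ (Fin n) => ((Metric.infDist x S : ℝ) : EReal)), w = t • u} :=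
  normalConeAtInfty_subset_scalings_subInfty_dist_general S hScl
end

section
/- Let S := {(x_1, x_2) ∈ ℝ² : x_2 = x_1²} be the parabola in ℝ², and let d(·;S) be the distance function to S. Then (0,−1) ∈ ∂d(∞;S) but (0,−1) ∉ N(∞;S); in particular, the inclusion N(∞;S) ⊆ ℝ₊·∂d(∞;S) is strict for this set S. -/
open Filter Topology Set Pointwise RealInnerProductSpace

/-! Every point of the parabola has height `≥ 0`, so `d(y;S) ≥ -y₂` with equality at the points
`(0,-t)`; hence `(0,-1)` is a global subgradient of `d(·;S)` at `(0,-t)`, and letting `t → ∞` puts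
it in `∂d(∞;S)`. A Fréchet normal `w` at `(a,a²)` is orthogonal to the tangent `(1,2a)`, so if
`w₁` stays away from `0` along a sequence then `a = -w₀/(2w₁)` stays bounded: every normal at
infinity is horizontal, which excludes `(0,-1)`. Finally `(±1,0) ∈ ∂d(∞;S)` as limits of the
rescaled outer normals `(2a,-1)` at `(a,a²)`, `a → ±∞`; these are global subgradients of `d(·;S)`
because the parabola lies on one side of each of its tangent lines. -/

open Metric

section InnerProductSpace

variable {E : Type*} [NormedAddCommGroup E] [InnerProductSpace ℝ E]

lemma inner_nonpos_of_mem_frechetNormalCone {Ω : Set E} {x w : E}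
    (hw : w ∈ FrechetNormalCone Ω x) {φ : ℝ → E} {φ' : E}
    (hφ : HasDerivWithinAt φ φ' (Ioi 0) 0) (hφx : φ 0 = x) (hφΩ : ∀ t, φ t ∈ Ω) :
    ⟪w, φ'⟫ ≤ 0 := by
  have hslope : Tendsto (slope φ 0) (𝓝[>] 0) (𝓝 φ') :=
    (hasDerivWithinAt_iff_tendsto_slope' (lt_irrefl 0)).1 hφ
  have hcurve : Tendsto φ (𝓝[>] 0) (𝓝[Ω] x) :=
    tendsto_nhdsWithin_iff.2 ⟨hφx ▸ hφ.continuousWithinAt.tendsto, .of_forall hφΩ⟩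
  have hε : ∀ ε > (0 : ℝ), ⟪w, φ'⟫ ≤ ε * ‖φ'‖ := by
    intro ε hε
    have hlim := (tendsto_const_nhds (x := w).inner hslope).sub (hslope.norm.const_mul ε)
    refine sub_nonpos.1 (le_of_tendsto hlim ?_)
    filter_upwards [hcurve.eventually (hw.2 ε hε), self_mem_nhdsWithin] with t ht (htpos : 0 < t)
    simp only [slope_def_module, sub_zero, hφx, inner_smul_right,
      norm_smul, Real.norm_of_nonneg (inv_nonneg.2 htpos.le)]
    nlinarith [inv_pos.2 htpos]
  have hlim : Tendsto (fun ε : ℝ => ε * ‖φ'‖) (𝓝[>] 0) (𝓝 0) := by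
    simpa using ((tendsto_id (x := 𝓝 (0 : ℝ))).mono_left nhdsWithin_le_nhds).mul_const ‖φ'‖
  exact ge_of_tendsto hlim (eventually_nhdsWithin_of_forall hε)

lemma inner_eq_zero_of_mem_frechetNormalCone {Ω : Set E} {x w : E}
    (hw : w ∈ FrechetNormalCone Ω x) {φ : ℝ → E} {φ' : E}
    (hφ : HasDerivAt φ φ' 0) (hφx : φ 0 = x) (hφΩ : ∀ t, φ t ∈ Ω) :
    ⟪w, φ'⟫ = 0 := by
  refine le_antisymm (inner_nonpos_of_mem_frechetNormalCone hw hφ.hasDerivWithinAt hφx hφΩ) ?_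
  have hφneg : HasDerivWithinAt (fun t => φ (0 - t)) (-φ') (Ioi 0) 0 :=
    (HasDerivAt.comp_const_sub (0 : ℝ) 0 (by simpa using hφ)).hasDerivWithinAt
  simpa [inner_neg_right] using
    inner_nonpos_of_mem_frechetNormalCone hw hφneg (by simpa using hφx) fun t => hφΩ _

lemma mkP_neg_one_mem_frechetNormalCone_epiSet {f : E → ℝ} {x u : E}
    (hu : ∀ y, ⟪u, y - x⟫ ≤ f y - f x) :
    mkP u (-1) ∈ FrechetNormalCone (epiSet fun p => (f p : EReal)) (mkP x (f x)) := by
  refine ⟨show (f x : EReal) ≤ f x from le_rfl, fun ε hε => ?_⟩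
  filter_upwards [self_mem_nhdsWithin] with q (hq : f q.ofLp.1 ≤ (q.ofLp.2 : EReal))
  have hinner : ⟪mkP u (-1), q - mkP x (f x)⟫ = ⟪u, q.ofLp.1 - x⟫ - (q.ofLp.2 - f x) := by
    simp [mkP, WithLp.prod_inner_apply, sub_eq_add_neg]
  have := hu q.ofLp.1
  rw [EReal.coe_le_coe_iff] at hq
  rw [hinner]
  nlinarith [norm_nonneg (q - mkP x (f x))]

lemma mem_subInfty_of_forall_inner_le {f : E → ℝ} {xs us : ℕ → E} {u : E}
    (hsub : ∀ k y, ⟪us k, y - xs k⟫ ≤ f y - f (xs k))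
    (hxs : Tendsto (fun k => ‖xs k‖) atTop atTop) (hus : Tendsto us atTop (𝓝 u)) :
    u ∈ subInfty fun p => (f p : EReal) := by
  refine ⟨xs, fun k => mkP (us k) (-1), fun k => EReal.coe_ne_top _, hxs, fun k => ?_,
    hus.prodMk_nhds tendsto_const_nhds⟩
  rw [EReal.toReal_coe]
  exact ⟨fun _ => _, fun _ => _, fun _ => mkP_neg_one_mem_frechetNormalCone_epiSet (hsub k),
    tendsto_const_nhds, tendsto_const_nhds⟩

lemma inner_sub_le_infDist_sub {S : Set E} (hS : S.Nonempty) {x n : E} (hn : ‖n‖ ≤ 1)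
    (h : ∀ p ∈ S, ⟪n, p - x⟫ ≤ -infDist x S) (y : E) :
    ⟪n, y - x⟫ ≤ infDist y S - infDist x S := by
  suffices ⟪n, y - x⟫ + infDist x S ≤ infDist y S by linarith
  refine (le_infDist hS).2 fun p hp => ?_
  calc ⟪n, y - x⟫ + infDist x S = ⟪n, y - p⟫ + (⟪n, p - x⟫ + infDist x S) := by
        rw [← add_assoc, ← inner_add_right, sub_add_sub_cancel]
    _ ≤ ‖n‖ * ‖y - p‖ + 0 := add_le_add (real_inner_le_norm n _) (by linarith [h p hp])
    _ ≤ dist y p := by rw [add_zero, dist_eq_norm]; exact mul_le_of_le_one_left (norm_nonneg _) hn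

end InnerProductSpace

section Parabola

local notation "ℝ²" => EuclideanSpace ℝ (Fin 2)

lemma real_inner_fin_two (x y : ℝ²) : ⟪x, y⟫ = x 0 * y 0 + x 1 * y 1 := by
  simp [PiLp.inner_apply, Fin.sum_univ_two, mul_comm]

lemma norm_toLp_fin_two (a b : ℝ) : ‖(!₂[a, b] : ℝ²)‖ = √(a ^ 2 + b ^ 2) := by
  simp [EuclideanSpace.norm_eq, Fin.sum_univ_two]

lemma tendsto_toLp_fin_two {α : Type*} {l : Filter α} {f g : α → ℝ} {a b : ℝ}
    (hf : Tendsto f l (𝓝 a)) (hg : Tendsto g l (𝓝 b)) :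
    Tendsto (fun k => (!₂[f k, g k] : ℝ²)) l (𝓝 !₂[a, b]) :=
  ((PiLp.continuous_toLp 2 _).tendsto _).comp
    (tendsto_pi_nhds.2 (Fin.forall_fin_two.2 ⟨by simpa using hf, by simpa using hg⟩))

def parabola : Set ℝ² := {p | p 1 = p 0 ^ 2}

lemma toLp_mem_parabola (a : ℝ) : (!₂[a, a ^ 2] : ℝ²) ∈ parabola := by
  simp [parabola]

lemma zero_mem_parabola : (0 : ℝ²) ∈ parabola := by
  simp [parabola]

lemma eq_toLp_of_mem_parabola {x : ℝ²} (hx : x ∈ parabola) : x = !₂[x 0, x 0 ^ 2] := by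
  ext i; fin_cases i <;> simp [hx.symm]

lemma orthogonal_tangent_of_mem_frechetNormalCone_parabola {x w : ℝ²}
    (hw : w ∈ FrechetNormalCone parabola x) : w 0 + 2 * x 0 * w 1 = 0 := by
  have hx : x 1 = x 0 ^ 2 := hw.1
  have hcurve (t : ℝ) : x + t • !₂[1, 2 * x 0] + t ^ 2 • !₂[0, 1] ∈ parabola := by
    simp only [parabola, mem_ofPred_eq, PiLp.add_apply, PiLp.smul_apply, smul_eq_mul,
      Matrix.cons_val_zero, Matrix.cons_val_one, Matrix.cons_val_fin_one, hx]
    ring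
  have hderiv : HasDerivAt (fun t : ℝ => x + t • !₂[1, 2 * x 0] + t ^ 2 • !₂[0, 1])
      !₂[1, 2 * x 0] 0 := by
    refine ((((hasDerivAt_id (0 : ℝ)).smul_const !₂[1, 2 * x 0]).const_add x).add
      ((hasDerivAt_pow 2 (0 : ℝ)).smul_const (!₂[0, 1] : ℝ²))).congr_deriv ?_
    simp
  have := inner_eq_zero_of_mem_frechetNormalCone hw hderiv (by simp) hcurve
  simpa [real_inner_fin_two, mul_comm, mul_left_comm] using this

lemma normalConeAtInfty_parabola_subset : NormalConeAtInfty parabola ⊆ {w | w 1 = 0} := by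
  rintro w ⟨xs, ws, hws, hxs, hlim⟩
  by_contra hw1
  have hcoord (i : Fin 2) : Tendsto (fun k => ws k i) atTop (𝓝 (w i)) :=
    ((PiLp.continuous_apply 2 _ i).tendsto w).comp hlim
  have ha : Tendsto (fun k => xs k 0) atTop (𝓝 (-w 0 / (2 * w 1))) := by
    refine ((hcoord 0).neg.div ((hcoord 1).const_mul 2) (by simpa using hw1)).congr' ?_
    filter_upwards [(hcoord 1).eventually_ne hw1] with k hk
    rw [Pi.div_apply, div_eq_iff (by simpa using hk)]
    linear_combination -orthogonal_tangent_of_mem_frechetNormalCone_parabola (hws k)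
  have hbdd := (tendsto_toLp_fin_two ha (ha.pow 2)).norm
  refine not_tendsto_nhds_of_tendsto_atTop hxs _ (hbdd.congr fun k => ?_)
  rw [← eq_toLp_of_mem_parabola (hws k).1]

lemma toLp_zero_neg_one_mem_subInfty_infDist_parabola :
    (!₂[0, -1] : ℝ²) ∈ subInfty fun p => (infDist p parabola : EReal) := by
  have hnorm (t : ℝ) : ‖(!₂[0, -t] : ℝ²)‖ = |t| := by simp [norm_toLp_fin_two, Real.sqrt_sq_eq_abs]
  refine mem_subInfty_of_forall_inner_le (xs := fun k : ℕ => !₂[0, -(k : ℝ)])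
    (fun k => inner_sub_le_infDist_sub ⟨0, zero_mem_parabola⟩ (by simp [hnorm])
      fun p (hp : p 1 = p 0 ^ 2) => ?_)
    (by simpa [hnorm] using tendsto_natCast_atTop_atTop) tendsto_const_nhds
  have hdist : infDist (!₂[0, -k] : ℝ²) parabola ≤ k := by
    simpa [hnorm] using infDist_le_dist_of_mem zero_mem_parabola (x := !₂[0, -(k : ℝ)])
  have hinner : ⟪(!₂[0, -1] : ℝ²), p - !₂[0, -(k : ℝ)]⟫ = -(p 0 ^ 2 + k) := by
    simp [real_inner_fin_two, hp]
  linarith [sq_nonneg (p 0)]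

/-- An outer normal to the parabola at `(a, a²)`, scaled to norm at most one without a square
root; it tends to `(±1, 0)` as `a → ±∞`. -/
noncomputable def parabolaNormal (a : ℝ) : ℝ² := !₂[2 * a / (1 + 2 * |a|), -1 / (1 + 2 * |a|)]

lemma inner_parabolaNormal_le_infDist_sub (a : ℝ) (y : ℝ²) :
    ⟪parabolaNormal a, y - !₂[a, a ^ 2]⟫ ≤
      infDist y parabola - infDist !₂[a, a ^ 2] parabola := by
  have hc : 0 < 1 + 2 * |a| := by positivity
  refine inner_sub_le_infDist_sub ⟨0, zero_mem_parabola⟩ ?_ (fun p (hp : p 1 = p 0 ^ 2) => ?_) y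
  · rw [parabolaNormal, norm_toLp_fin_two, div_pow, div_pow, ← add_div]
    refine Real.sqrt_le_one.2 ((div_le_one (by positivity)).2 ?_)
    nlinarith [sq_abs a, abs_nonneg a]
  · rw [infDist_zero_of_mem (toLp_mem_parabola a), neg_zero]
    have hinner : ⟪parabolaNormal a, p - !₂[a, a ^ 2]⟫ = -(p 0 - a) ^ 2 / (1 + 2 * |a|) := by
      simp only [parabolaNormal, real_inner_fin_two, PiLp.sub_apply, Matrix.cons_val_zero,
        Matrix.cons_val_one, Matrix.cons_val_fin_one, hp]
      field_simp
      ring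
    rw [hinner]
    exact div_nonpos_of_nonpos_of_nonneg (neg_nonpos.2 (sq_nonneg _)) hc.le

lemma toLp_sign_zero_mem_subInfty_infDist_parabola {σ : ℝ} (hσ : |σ| = 1) :
    (!₂[σ, 0] : ℝ²) ∈ subInfty fun p => (infDist p parabola : EReal) := by
  have habs (k : ℕ) : |σ * k| = k := by rw [abs_mul, hσ, one_mul, Nat.abs_cast]
  refine mem_subInfty_of_forall_inner_le (xs := fun k : ℕ => !₂[σ * k, (σ * k) ^ 2])
    (fun k => inner_parabolaNormal_le_infDist_sub _) ?_ ?_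
  · refine tendsto_atTop_mono (fun k => ?_) tendsto_natCast_atTop_atTop
    simpa [habs, hσ] using PiLp.norm_apply_le (!₂[σ * k, (σ * k) ^ 2] : ℝ²) 0
  · simp only [parabolaNormal, habs]
    refine tendsto_toLp_fin_two ?_ ?_
    · have := (tendsto_natCast_div_add_atTop (1 / 2 : ℝ)).const_mul σ
      rw [mul_one] at this
      refine this.congr fun k => ?_
      field_simp
      ring
    · exact tendsto_const_nhds.div_atTop (tendsto_atTop_add_const_left _ 1
        (tendsto_natCast_atTop_atTop.const_mul_atTop two_pos))

end Parabola

/-- Remark 4.2: for the parabola, `(0,-1) ∈ ∂d(∞;S)` but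
`(0,-1) ∉ N(∞;S)`; in particular the inclusion `N(∞;S) ⊆ ℝ₊·∂d(∞;S)` is strict. -/
theorem parabola_strict_inclusion (S : Set (EuclideanSpace ℝ (Fin 2)))
    (hS : S = {p : EuclideanSpace ℝ (Fin 2) | p 1 = (p 0)^2})
    (v : EuclideanSpace ℝ (Fin 2)) (hv0 : v 0 = 0) (hv1 : v 1 = -1) :
    v ∈ subInfty (fun p : EuclideanSpace ℝ (Fin 2) => ((Metric.infDist p S : ℝ) : EReal)) ∧
    v ∉ NormalConeAtInfty S ∧
    NormalConeAtInfty S ⊂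
      {w | ∃ t : ℝ, 0 ≤ t ∧ ∃ u ∈ subInfty
        (fun p : EuclideanSpace ℝ (Fin 2) => ((Metric.infDist p S : ℝ) : EReal)), w = t • u} := by
  change S = parabola at hS
  subst hS
  have hv : v = !₂[0, -1] := by ext i; fin_cases i <;> simp [hv0, hv1]
  have hv_mem : v ∈ subInfty fun p => (infDist p parabola : EReal) :=
    hv ▸ toLp_zero_neg_one_mem_subInfty_infDist_parabola
  have hv_not : v ∉ NormalConeAtInfty parabola := fun h => by
    simpa [hv1] using normalConeAtInfty_parabola_subset h
  refine ⟨hv_mem, hv_not, ssubset_of_subset_not_superset (fun w hw => ?_)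
    fun h => hv_not (h ⟨1, zero_le_one, v, hv_mem, (one_smul ℝ v).symm⟩)⟩
  have hw1 : w 1 = 0 := normalConeAtInfty_parabola_subset hw
  rcases le_total 0 (w 0) with hw0 | hw0
  · refine ⟨w 0, hw0, !₂[1, 0], toLp_sign_zero_mem_subInfty_infDist_parabola abs_one, ?_⟩
    ext i; fin_cases i <;> simp [hw1]
  · refine ⟨-w 0, neg_nonneg.2 hw0, !₂[-1, 0],
      toLp_sign_zero_mem_subInfty_infDist_parabola (by simp), ?_⟩
    ext i; fin_cases i <;> simp [hw1]
end
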